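/- Let s ∈ W be an involution such that s(ϖ_i) ≠ ϖ_i for every i ∈ {1,…,l}. Then the set of all λ = Σ_{i=1}^l λ_i ϖ_i with 2λ_i a positive integer for every i, satisfying ‖2λ‖² ≤ ‖{μ − ρ} + ρ‖² where μ := {λ + s(λ)}, is finite. -/

import Mathlib

open scoped RealInnerProductSpace

noncomputable section

/-- The pairing `⟨v, a∨⟩ = 2⟪v,a⟫/⟪a,a⟫` of `v` against the coroot of `a`. -/
def copair {V : Type*} [NormedAddCommGroup V] [InnerProductSpace ℝ V] (v a : V) : ℝ :=
  2 * ⟪v, a⟫ / ⟪a, a⟫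

/-- The orthogonal reflection `s_a` in the hyperplane orthogonal to `a`,
as a linear isometry of `V`. -/
def sRefl {V : Type*} [NormedAddCommGroup V] [InnerProductSpace ℝ V] [FiniteDimensional ℝ V]
    (a : V) : V ≃ₗᵢ[ℝ] V :=
  Submodule.reflection (ℝ ∙ a)ᗮ

/-- A finite crystallographic reduced root system `Φ` spanning a finite-dimensional real inner
product space `V`, together with a choice of positive roots `pos`, simple roots `sroot`,
and fundamental weights `fw`. -/
structure RootSystemCtx (V : Type*) [NormedAddCommGroup V] [InnerProductSpace ℝ V]
    [FiniteDimensional ℝ V] where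
  l : ℕ
  Φ : Finset V
  pos : Finset V
  sroot : Fin l → V
  fw : Fin l → V
  nonzero : ∀ a ∈ Φ, a ≠ (0 : V)
  span_top : Submodule.span ℝ (Φ : Set V) = ⊤
  reduced : ∀ a ∈ Φ, ∀ t : ℝ, t • a ∈ Φ → t = 1 ∨ t = -1
  refl_mem : ∀ a ∈ Φ, ∀ b ∈ Φ, sRefl a b ∈ Φ
  crystal : ∀ a ∈ Φ, ∀ b ∈ Φ, ∃ n : ℤ, copair b a = (n : ℝ)
  pos_subset : pos ⊆ Φ
  mem_pos_or : ∀ a ∈ Φ, (a ∈ pos ∧ -a ∉ pos) ∨ (a ∉ pos ∧ -a ∈ pos)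
  sroot_mem : ∀ i, sroot i ∈ pos
  sroot_indep : LinearIndependent ℝ sroot
  pos_nat_comb : ∀ a ∈ pos, ∃ c : Fin l → ℕ, a = ∑ i, (c i : ℝ) • sroot i
  fw_pairing : ∀ i j, copair (fw i) (sroot j) = if i = j then 1 else 0

namespace RootSystemCtx

variable {V : Type*} [NormedAddCommGroup V] [InnerProductSpace ℝ V] [FiniteDimensional ℝ V]
variable (R : RootSystemCtx V)

/-- The half sum of the positive roots, `ρ = Σ_i ϖ_i`. -/
def rho : V := ∑ i, R.fw i

/-- The Weyl group `W`, the subgroup of the isometry group of `V` generated by the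
reflections in the roots. -/
def weylGroup : Subgroup (V ≃ₗᵢ[ℝ] V) :=
  Subgroup.closure {g | ∃ a ∈ R.Φ, g = sRefl a}

/-- `γ` is an expression of `w` as a product of simple reflections. -/
def IsExpression (w : V ≃ₗᵢ[ℝ] V) (γ : List (Fin R.l)) : Prop :=
  w = (γ.map fun i => sRefl (R.sroot i)).prod

/-- `γ` is a reduced expression of `w`: an expression of minimal possible length. -/
def IsReducedExpression (w : V ≃ₗᵢ[ℝ] V) (γ : List (Fin R.l)) : Prop :=
  R.IsExpression w γ ∧ ∀ γ' : List (Fin R.l), R.IsExpression w γ' → γ.length ≤ γ'.length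

/-- A weight is dominant if it pairs nonnegatively with every simple coroot. -/
def IsDominant (v : V) : Prop := ∀ i, 0 ≤ copair v (R.sroot i)

/-- `d` is the dominant representative `{v}` of the Weyl group orbit of `v`. -/
def IsDomRep (v d : V) : Prop := R.IsDominant d ∧ ∃ w ∈ R.weylGroup, w v = d

end RootSystemCtx

namespace RootSystemCtx

variable {V : Type*} [NormedAddCommGroup V] [InnerProductSpace ℝ V] [FiniteDimensional ℝ V]

/-- The dominant representative `{v}` of the Weyl group orbit of `v` (for a root system such
a representative exists and is unique, so the choice below is well defined). -/
noncomputable def domRep (R : RootSystemCtx V) (v : V) : V :=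
  letI := Classical.propDecidable (∃ d, R.IsDomRep v d)
  if h : ∃ d, R.IsDomRep v d then h.choose else v

end RootSystemCtx

/-!
Write `λ = ∑ c_i ϖ_i`. The dominant representative `{·}` preserves norms, so the hypothesis gives
`‖2λ‖ ≤ ‖λ + sλ‖ + 2‖ρ‖`; by the parallelogram law (`‖sλ‖ = ‖λ‖`) this bounds `‖λ - sλ‖²`
linearly in `‖λ‖`, hence linearly in the `c_i`. On the other hand, for dominant `μ, ν` and
`w ∈ W` the vector `μ - wμ` is a nonnegative combination of simple roots, so
`⟪ϖ_j, ϖ_i - sϖ_i⟫ ≥ 0` for all `i, j`, and therefore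
`‖λ - sλ‖² = 2⟪λ, λ - sλ⟫ ≥ ∑ c_i² ‖ϖ_i - sϖ_i‖²`, which is quadratic in the `c_i` because no
`ϖ_i` is fixed by `s`. Hence the `c_i` are bounded, and as they lie in `½ℕ` only finitely many
`λ` remain.
-/

section Reflection

variable {V : Type*} [NormedAddCommGroup V] [InnerProductSpace ℝ V] [FiniteDimensional ℝ V]

lemma sRefl_apply (a v : V) : sRefl a v = v - copair v a • a := by
  rw [sRefl, Submodule.reflection_orthogonal_apply, Submodule.reflection_singleton_apply,
    RCLike.ofReal_real_eq_id, id, ← real_inner_self_eq_norm_sq, real_inner_comm, copair,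
    two_smul, mul_div_assoc, two_mul, add_smul]
  abel

@[simp] lemma sRefl_sRefl (a v : V) : sRefl a (sRefl a v) = v :=
  Submodule.reflection_reflection _ v

lemma sRefl_mul_self (a : V) : sRefl a * sRefl a = 1 := by
  ext v
  exact sRefl_sRefl a v

lemma sRefl_inv (a : V) : (sRefl a)⁻¹ = sRefl a :=
  inv_eq_of_mul_eq_one_right (sRefl_mul_self a)

lemma sRefl_neg (a : V) : sRefl (-a) = sRefl a := by
  unfold sRefl
  congr 2
  rw [← Set.neg_singleton, Submodule.span_neg]

lemma sRefl_map (g : V ≃ₗᵢ[ℝ] V) (a : V) : sRefl (g a) = g * sRefl a * g⁻¹ := by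
  ext v
  show sRefl (g a) v = g (sRefl a (g.symm v))
  rw [sRefl, sRefl, ← Submodule.reflection_map_apply]
  congr 2
  rw [Submodule.map_orthogonal_equiv, Submodule.map_span, Set.image_singleton]
  rfl

end Reflection

section InnerProduct

variable {V : Type*} [NormedAddCommGroup V] [InnerProductSpace ℝ V]

lemma inner_nonneg_of_copair_nonneg {v a : V} (h : 0 ≤ copair v a) : 0 ≤ ⟪v, a⟫ := by
  rcases eq_or_ne a 0 with rfl | ha
  · simp
  · have hpos : 0 < ⟪a, a⟫ := real_inner_self_pos.mpr ha
    rw [copair] at h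
    nlinarith [div_mul_cancel₀ (2 * ⟪v, a⟫) hpos.ne']

lemma norm_sub_sq_eq_two_inner_of_norm_eq {x y : V} (h : ‖y‖ = ‖x‖) :
    ‖x - y‖ ^ 2 = 2 * ⟪x, x - y⟫ := by
  rw [norm_sub_sq_real, inner_sub_right, real_inner_self_eq_norm_sq, h]
  ring

lemma norm_sub_sq_le_of_norm_two_smul_le {x y : V} (h : ‖y‖ = ‖x‖) {K : ℝ} (hK : 0 ≤ K)
    (hle : ‖(2 : ℝ) • x‖ ^ 2 ≤ (‖x + y‖ + K) ^ 2) : ‖x - y‖ ^ 2 ≤ 4 * K * ‖x‖ + K ^ 2 := by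
  have parallelogram : ‖x + y‖ ^ 2 + ‖x - y‖ ^ 2 = 4 * ‖x‖ ^ 2 := by
    rw [norm_add_sq_real, norm_sub_sq_real, h]
    ring
  have hsum : ‖x + y‖ ≤ 2 * ‖x‖ := by
    have := norm_add_le x y
    linarith
  rw [norm_smul, Real.norm_two, mul_pow] at hle
  nlinarith [mul_le_mul_of_nonneg_left hsum hK]

end InnerProduct

lemma le_max_one_of_mul_sq_le {a b c x : ℝ} (ha : 0 < a) (hc : 0 ≤ c)
    (h : a * x ^ 2 ≤ b * x + c) : x ≤ max 1 ((b + c) / a) := by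
  rcases le_or_gt x 1 with hx | hx
  · exact le_max_of_le_left hx
  · refine le_max_of_le_right ((le_div_iff₀ ha).mpr ?_)
    nlinarith

lemma finite_setOf_sum_halfNat_smul {V ι : Type*} [AddCommGroup V] [Module ℝ V] [Fintype ι]
    (v : ι → V) (B : ℝ) :
    {x : V | ∃ c : ι → ℝ, (∀ i, ∃ m : ℕ, 2 * c i = m) ∧ (∀ i, c i ≤ B) ∧
      x = ∑ i, c i • v i}.Finite := by
  refine ((Set.Finite.pi fun _ => Set.finite_Iic ⌈2 * B⌉₊).image
    fun m : ι → ℕ => ∑ i, ((m i : ℝ) / 2) • v i).subset ?_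
  rintro _ ⟨c, hc, hcB, rfl⟩
  choose m hm using hc
  refine ⟨m, fun i _ => ?_, Finset.sum_congr rfl fun i _ => ?_⟩
  · exact Nat.cast_le.mp ((by linarith [hm i, hcB i] : (m i : ℝ) ≤ 2 * B).trans (Nat.le_ceil _))
  · rw [← hm i, mul_div_cancel_left₀ _ two_ne_zero]

namespace RootSystemCtx

variable {V : Type*} [NormedAddCommGroup V] [InnerProductSpace ℝ V] [FiniteDimensional ℝ V]
variable (R : RootSystemCtx V)

lemma sroot_mem_Φ (i : Fin R.l) : R.sroot i ∈ R.Φ := R.pos_subset (R.sroot_mem i)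

lemma sroot_ne_zero (i : Fin R.l) : R.sroot i ≠ 0 := R.nonzero _ (R.sroot_mem_Φ i)

lemma sum_smul_sroot_sub_smul (c : Fin R.l → ℝ) (i : Fin R.l) (k : ℝ) :
    ∑ m, c m • R.sroot m - k • R.sroot i =
      ∑ m, (c m - if m = i then k else 0) • R.sroot m := by
  simp only [sub_smul, ite_smul, zero_smul, Finset.sum_sub_distrib, Finset.sum_ite_eq',
    Finset.mem_univ, if_true]

lemma sRefl_sroot_mem_pos (i : Fin R.l) {b : V} (hb : b ∈ R.pos) (hne : b ≠ R.sroot i) :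
    sRefl (R.sroot i) b ∈ R.pos := by
  obtain ⟨c, rfl⟩ := R.pos_nat_comb b hb
  have hbΦ := R.pos_subset hb
  obtain ⟨j, hji, hcj⟩ : ∃ j, j ≠ i ∧ c j ≠ 0 := by
    by_contra! hzero
    have hb_eq : ∑ m, (c m : ℝ) • R.sroot m = (c i : ℝ) • R.sroot i :=
      Finset.sum_eq_single i (fun j _ hji => by simp [hzero j hji]) (by simp)
    rw [hb_eq] at hne hbΦ
    rcases R.reduced _ (R.sroot_mem_Φ i) _ hbΦ with h | h
    · exact hne (by rw [h, one_smul])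
    · linarith [(c i).cast_nonneg (α := ℝ)]
  rcases R.mem_pos_or _ (R.refl_mem _ (R.sroot_mem_Φ i) _ hbΦ) with h | ⟨-, hneg⟩
  · exact h.1
  · exfalso
    obtain ⟨d, hd⟩ := R.pos_nat_comb _ hneg
    rw [sRefl_apply, R.sum_smul_sroot_sub_smul, neg_eq_iff_eq_neg, ← Finset.sum_neg_distrib] at hd
    simp only [← neg_smul] at hd
    have hcoeff := Fintype.linearIndependent_iffₛ.mp R.sroot_indep _ _ hd j
    simp only [if_neg hji, sub_zero] at hcoeff
    have hcj_pos : (0 : ℝ) < c j := Nat.cast_pos.mpr (Nat.pos_of_ne_zero hcj)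
    linarith [(d j).cast_nonneg (α := ℝ)]

def wordProd (γ : List (Fin R.l)) : V ≃ₗᵢ[ℝ] V :=
  (γ.map fun i => sRefl (R.sroot i)).prod

@[simp] lemma wordProd_nil : R.wordProd [] = 1 := rfl

lemma wordProd_cons (i : Fin R.l) (γ : List (Fin R.l)) :
    R.wordProd (i :: γ) = sRefl (R.sroot i) * R.wordProd γ := by
  rw [wordProd, List.map_cons, List.prod_cons, wordProd]

lemma wordProd_append (γ δ : List (Fin R.l)) :
    R.wordProd (γ ++ δ) = R.wordProd γ * R.wordProd δ := by
  rw [wordProd, List.map_append, List.prod_append, wordProd, wordProd]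

lemma wordProd_singleton (i : Fin R.l) : R.wordProd [i] = sRefl (R.sroot i) := by
  rw [wordProd_cons, wordProd_nil, mul_one]

lemma wordProd_reverse (γ : List (Fin R.l)) : R.wordProd γ.reverse = (R.wordProd γ)⁻¹ := by
  induction γ with
  | nil => simp
  | cons i γ ih =>
    rw [List.reverse_cons, wordProd_append, ih, wordProd_singleton, wordProd_cons, mul_inv_rev,
      sRefl_inv]

lemma wordProd_apply_mem_Φ (γ : List (Fin R.l)) {b : V} (hb : b ∈ R.Φ) :
    R.wordProd γ b ∈ R.Φ := by
  induction γ with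
  | nil => exact hb
  | cons i γ ih =>
    rw [wordProd_cons]
    exact R.refl_mem _ (R.sroot_mem_Φ i) _ ih

lemma exists_inner_sroot_pos {a : V} (ha : a ∈ R.pos) : ∃ i, 0 < ⟪a, R.sroot i⟫ := by
  obtain ⟨c, hc⟩ := R.pos_nat_comb a ha
  by_contra! hle
  have hself : ⟪a, a⟫ ≤ 0 := by
    nth_rewrite 2 [hc]
    rw [inner_sum]
    exact Finset.sum_nonpos fun i _ => by
      rw [real_inner_smul_right]
      exact mul_nonpos_of_nonneg_of_nonpos (Nat.cast_nonneg _) (hle i)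
  exact R.nonzero a (R.pos_subset ha) (real_inner_self_nonpos.mp hself)

/-- Induction on the height `∑ i, c i`: some simple reflection `s_i` lowers the height of a
non-simple positive root `a`, and `s_a = s_i s_{s_i a} s_i`. -/
lemma exists_wordProd_eq_sRefl {a : V} (ha : a ∈ R.pos) : ∃ γ, sRefl a = R.wordProd γ := by
  obtain ⟨c, hc⟩ := R.pos_nat_comb a ha
  induction hn : ∑ i, c i using Nat.strong_induction_on generalizing a c with
  | _ n ih =>
  by_cases hsimple : ∃ i, a = R.sroot i
  · obtain ⟨i, rfl⟩ := hsimple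
    exact ⟨[i], (R.wordProd_singleton i).symm⟩
  push Not at hsimple
  obtain ⟨i, hi⟩ := R.exists_inner_sroot_pos ha
  obtain ⟨k, hk⟩ := R.crystal _ (R.sroot_mem_Φ i) a (R.pos_subset ha)
  have hk1 : (1 : ℝ) ≤ k := by
    have : 0 < copair a (R.sroot i) :=
      div_pos (by linarith) (real_inner_self_pos.mpr (R.sroot_ne_zero i))
    rw [hk] at this
    exact_mod_cast this
  have hb := R.sRefl_sroot_mem_pos i ha (hsimple i)
  obtain ⟨d, hd⟩ := R.pos_nat_comb _ hb
  have hdc : ∀ m, (d m : ℝ) = c m - if m = i then (k : ℝ) else 0 := by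
    rw [sRefl_apply, hk, hc, R.sum_smul_sroot_sub_smul] at hd
    exact fun m => (Fintype.linearIndependent_iffₛ.mp R.sroot_indep _ _ hd m).symm
  have hlt : ∑ m, d m < n := by
    have hsum : ((∑ m, d m : ℕ) : ℝ) = n - k := by
      push_cast
      simp only [hdc, Finset.sum_sub_distrib, Finset.sum_ite_eq', Finset.mem_univ, if_true]
      rw [← hn]
      push_cast
      rfl
    exact_mod_cast (by linarith : ((∑ m, d m : ℕ) : ℝ) < n)
  obtain ⟨γ, hγ⟩ := ih _ hlt hb d hd rfl
  refine ⟨i :: (γ ++ [i]), ?_⟩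
  calc sRefl a = sRefl (sRefl (R.sroot i) (sRefl (R.sroot i) a)) := by
        rw [sRefl_sRefl]
    _ = R.wordProd (i :: (γ ++ [i])) := by
        rw [sRefl_map, hγ, sRefl_inv, wordProd_cons, wordProd_append, wordProd_singleton,
          mul_assoc]

lemma exists_wordProd_eq {w : V ≃ₗᵢ[ℝ] V} (hw : w ∈ R.weylGroup) : ∃ γ, w = R.wordProd γ := by
  induction hw using Subgroup.closure_induction with
  | mem g hg =>
    obtain ⟨a, haΦ, rfl⟩ := hg
    rcases R.mem_pos_or a haΦ with ⟨ha, -⟩ | ⟨-, ha⟩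
    · exact R.exists_wordProd_eq_sRefl ha
    · rw [← sRefl_neg]
      exact R.exists_wordProd_eq_sRefl ha
  | one => exact ⟨[], rfl⟩
  | mul x y _ _ hx hy =>
    obtain ⟨γ, rfl⟩ := hx
    obtain ⟨δ, rfl⟩ := hy
    exact ⟨γ ++ δ, (R.wordProd_append γ δ).symm⟩
  | inv x _ hx =>
    obtain ⟨γ, rfl⟩ := hx
    exact ⟨γ.reverse, (R.wordProd_reverse γ).symm⟩

lemma neg_notMem_pos {a : V} (ha : a ∈ R.pos) : -a ∉ R.pos := by
  rcases R.mem_pos_or a (R.pos_subset ha) with h | h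
  exacts [h.2, (h.1 ha).elim]

/-- The deletion condition. -/
lemma exists_wordProd_mul_sRefl_eq (γ : List (Fin R.l)) (i : Fin R.l)
    (hneg : -(R.wordProd γ (R.sroot i)) ∈ R.pos) :
    ∃ γ', R.wordProd γ * sRefl (R.sroot i) = R.wordProd γ' ∧ γ'.length + 1 = γ.length := by
  induction γ with
  | nil => exact (R.neg_notMem_pos (R.sroot_mem i) hneg).elim
  | cons j δ ih =>
    have hx := R.wordProd_apply_mem_Φ δ (R.sroot_mem_Φ i)
    rw [wordProd_cons] at hneg
    rcases R.mem_pos_or _ hx with ⟨hpos, -⟩ | ⟨-, hxneg⟩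
    · have hxj : R.wordProd δ (R.sroot i) = R.sroot j := by
        by_contra hne
        exact R.neg_notMem_pos (R.sRefl_sroot_mem_pos j hpos hne) hneg
      refine ⟨δ, ?_, rfl⟩
      rw [wordProd_cons, ← hxj, sRefl_map, inv_mul_cancel_right, mul_assoc, sRefl_mul_self,
        mul_one]
    · obtain ⟨δ', hδ', hlen⟩ := ih hxneg
      exact ⟨j :: δ', by rw [wordProd_cons, wordProd_cons, mul_assoc, hδ'], by simp [← hlen]⟩

variable {R}

lemma IsDominant.inner_nonneg_of_mem_pos {ν : V} (hν : R.IsDominant ν) {a : V}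
    (ha : a ∈ R.pos) : 0 ≤ ⟪ν, a⟫ := by
  obtain ⟨c, rfl⟩ := R.pos_nat_comb a ha
  rw [inner_sum]
  exact Finset.sum_nonneg fun i _ => by
    rw [real_inner_smul_right]
    exact mul_nonneg (Nat.cast_nonneg _) (inner_nonneg_of_copair_nonneg (hν i))

/-- Peeling off the last letter, `μ - w s_i μ = (μ - w μ) + ⟨μ, α_i∨⟩ w α_i`; when `w α_i` is
negative the deletion condition shortens the word instead. -/
lemma IsDominant.inner_sub_wordProd_nonneg {μ ν : V} (hμ : R.IsDominant μ)
    (hν : R.IsDominant ν) (γ : List (Fin R.l)) : 0 ≤ ⟪ν, μ - R.wordProd γ μ⟫ := by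
  induction hn : γ.length using Nat.strong_induction_on generalizing γ with
  | _ n ih =>
  rcases γ.eq_nil_or_concat with rfl | ⟨δ, i, rfl⟩
  · simp
  rw [List.concat_eq_append] at hn ⊢
  rcases R.mem_pos_or _ (R.wordProd_apply_mem_Φ δ (R.sroot_mem_Φ i)) with ⟨hpos, -⟩ | ⟨-, hneg⟩
  · have hsplit : μ - R.wordProd (δ ++ [i]) μ =
        (μ - R.wordProd δ μ) + copair μ (R.sroot i) • R.wordProd δ (R.sroot i) := by
      rw [wordProd_append, wordProd_singleton, LinearIsometryEquiv.coe_mul, Function.comp_apply,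
        sRefl_apply, map_sub, map_smul]
      abel
    rw [hsplit, inner_add_right, real_inner_smul_right]
    exact add_nonneg (ih _ (by simp [← hn]) δ rfl)
      (mul_nonneg (hμ i) (hν.inner_nonneg_of_mem_pos hpos))
  · obtain ⟨γ', hγ', hlen⟩ := R.exists_wordProd_mul_sRefl_eq δ i hneg
    rw [wordProd_append, wordProd_singleton, hγ']
    exact ih _ (by simp [← hn, ← hlen]) γ' rfl

lemma IsDominant.inner_sub_apply_nonneg {μ ν : V} (hμ : R.IsDominant μ) (hν : R.IsDominant ν)
    {w : V ≃ₗᵢ[ℝ] V} (hw : w ∈ R.weylGroup) : 0 ≤ ⟪ν, μ - w μ⟫ := by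
  obtain ⟨γ, rfl⟩ := R.exists_wordProd_eq hw
  exact hμ.inner_sub_wordProd_nonneg hν γ

variable (R)

lemma fw_isDominant (j : Fin R.l) : R.IsDominant (R.fw j) := by
  intro i
  rw [R.fw_pairing j i]
  split_ifs <;> norm_num

lemma norm_domRep (v : V) : ‖R.domRep v‖ = ‖v‖ := by
  rw [domRep]
  split_ifs with h
  · obtain ⟨w, -, hwv⟩ := h.choose_spec.2
    rw [← hwv, w.norm_map]
  · rfl

lemma norm_domRep_sub_add_le (v x : V) :
    ‖R.domRep (R.domRep v - x) + x‖ ≤ ‖v‖ + 2 * ‖x‖ := by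
  calc ‖R.domRep (R.domRep v - x) + x‖ ≤ ‖R.domRep v - x‖ + ‖x‖ := by
        grw [norm_add_le, norm_domRep]
    _ ≤ ‖v‖ + 2 * ‖x‖ := by
        grw [norm_sub_le, norm_domRep]
        linarith

variable {R}

lemma sum_sq_mul_norm_sub_apply_le {ι : Type*} [Fintype ι] {v : ι → V}
    (hv : ∀ i, R.IsDominant (v i)) {w : V ≃ₗᵢ[ℝ] V} (hw : w ∈ R.weylGroup) {c : ι → ℝ}
    (hc : ∀ i, 0 ≤ c i) :
    ∑ i, c i ^ 2 * ‖v i - w (v i)‖ ^ 2 ≤ ‖∑ i, c i • v i - w (∑ i, c i • v i)‖ ^ 2 := by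
  set x := ∑ i, c i • v i
  have hdiff : x - w x = ∑ i, c i • (v i - w (v i)) := by
    simp only [x, map_sum, map_smul, smul_sub, Finset.sum_sub_distrib]
  have hterm : ∀ i, c i * ‖v i - w (v i)‖ ^ 2 ≤ 2 * ⟪x, v i - w (v i)⟫ := by
    intro i
    have hdiag : ‖v i - w (v i)‖ ^ 2 = 2 * ⟪v i, v i - w (v i)⟫ :=
      norm_sub_sq_eq_two_inner_of_norm_eq (w.norm_map _)
    have hsingle : c i * ⟪v i, v i - w (v i)⟫ ≤ ⟪x, v i - w (v i)⟫ := by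
      simp only [x, sum_inner, real_inner_smul_left]
      exact Finset.single_le_sum (f := fun j => c j * ⟪v j, v i - w (v i)⟫)
        (fun j _ => mul_nonneg (hc j) ((hv i).inner_sub_apply_nonneg (hv j) hw))
        (Finset.mem_univ i)
    rw [hdiag]
    linarith
  rw [norm_sub_sq_eq_two_inner_of_norm_eq (w.norm_map x), hdiff, inner_sum, Finset.mul_sum]
  refine Finset.sum_le_sum fun i _ => ?_
  rw [real_inner_smul_right, sq, mul_assoc]
  nlinarith [mul_le_mul_of_nonneg_left (hterm i) (hc i)]

lemma exists_coeff_bound {ι : Type*} [Fintype ι] {v : ι → V} (hv : ∀ i, R.IsDominant (v i))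
    {w : V ≃ₗᵢ[ℝ] V} (hw : w ∈ R.weylGroup) (hfix : ∀ i, w (v i) ≠ v i) {K : ℝ} (hK : 0 ≤ K) :
    ∃ B, ∀ c : ι → ℝ, (∀ i, 0 ≤ c i) →
      ‖(2 : ℝ) • ∑ i, c i • v i‖ ^ 2 ≤ (‖∑ i, c i • v i + w (∑ i, c i • v i)‖ + K) ^ 2 →
      ∀ i, c i ≤ B := by
  obtain ⟨δ, hδ, hδle⟩ : ∃ δ > 0, ∀ i, δ ≤ ‖v i - w (v i)‖ ^ 2 := by
    rcases isEmpty_or_nonempty ι with _ | _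
    · exact ⟨1, one_pos, isEmptyElim⟩
    · obtain ⟨j, hj⟩ := Finite.exists_min fun i => ‖v i - w (v i)‖ ^ 2
      exact ⟨_, pow_pos (norm_pos_iff.mpr (sub_ne_zero.mpr (hfix j).symm)) 2, hj⟩
  set M := ∑ i, ‖v i‖
  set n : ℝ := (Fintype.card ι : ℝ)
  refine ⟨max 1 ((n * (4 * K * M) + n * K ^ 2) / δ), fun c hc hle j => ?_⟩
  set x := ∑ i, c i • v i
  set S := ∑ i, c i
  have hnorm : ‖x‖ ≤ S * M := by
    calc ‖x‖ ≤ ∑ i, c i * ‖v i‖ := by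
          refine (norm_sum_le _ _).trans_eq (Finset.sum_congr rfl fun i _ => ?_)
          rw [norm_smul, Real.norm_of_nonneg (hc i)]
      _ ≤ ∑ i, S * ‖v i‖ := by
          gcongr with i
          exact Finset.single_le_sum (fun i _ => hc i) (Finset.mem_univ i)
      _ = S * M := by rw [Finset.mul_sum]
  have hquad : δ * S ^ 2 ≤ n * (4 * K * M) * S + n * K ^ 2 := by
    calc δ * S ^ 2 ≤ δ * (n * ∑ i, c i ^ 2) := by
          gcongr
          simpa using sq_sum_le_card_mul_sum_sq (s := Finset.univ) (f := c)
      _ = n * ∑ i, c i ^ 2 * δ := by rw [← Finset.sum_mul]; ring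
      _ ≤ n * ‖x - w x‖ ^ 2 := by
          gcongr
          exact (Finset.sum_le_sum fun i _ => by gcongr; exact hδle i).trans
            (sum_sq_mul_norm_sub_apply_le hv hw hc)
      _ ≤ n * (4 * K * (S * M) + K ^ 2) := by
          grw [norm_sub_sq_le_of_norm_two_smul_le (w.norm_map x) hK hle, hnorm]
      _ = n * (4 * K * M) * S + n * K ^ 2 := by ring
  exact (Finset.single_le_sum (fun i _ => hc i) (Finset.mem_univ j)).trans
    (le_max_one_of_mul_sq_le hδ (by positivity) hquad)

end RootSystemCtx

theorem statement6_general {V : Type*} [NormedAddCommGroup V] [InnerProductSpace ℝ V]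
    [FiniteDimensional ℝ V] (R : RootSystemCtx V)
    (s : V ≃ₗᵢ[ℝ] V) (hs : s ∈ R.weylGroup)
    (hfix : ∀ i, s (R.fw i) ≠ R.fw i) :
    {lam : V |
      (∃ c : Fin R.l → ℝ, (∀ i, ∃ m : ℕ, 0 < m ∧ 2 * c i = (m : ℝ)) ∧
        lam = ∑ i, c i • R.fw i) ∧
      ‖(2 : ℝ) • lam‖ ^ 2 ≤
        ‖R.domRep (R.domRep (lam + s lam) - R.rho) + R.rho‖ ^ 2}.Finite := by
  obtain ⟨B, hB⟩ := R.exists_coeff_bound R.fw_isDominant hs hfix (by positivity : 0 ≤ 2 * ‖R.rho‖)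
  refine (finite_setOf_sum_halfNat_smul R.fw B).subset ?_
  rintro _ ⟨⟨c, hc, rfl⟩, hle⟩
  have hc0 : ∀ i, 0 ≤ c i := fun i => by
    obtain ⟨m, -, hm⟩ := hc i
    linarith [m.cast_nonneg (α := ℝ)]
  refine ⟨c, fun i => (hc i).imp fun _ => And.right, hB c hc0 (hle.trans ?_), rfl⟩
  gcongr
  exact R.norm_domRep_sub_add_le _ _

/-- For an involution `s ∈ W` with `s(ϖ_i) ≠ ϖ_i` for every `i`, the set of all
`λ = Σ λ_i ϖ_i` with each `2λ_i` a positive integer and `‖2λ‖² ≤ ‖{μ − ρ} + ρ‖²`, where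
`μ := {λ + s(λ)}`, is finite. -/
theorem statement6 {V : Type*} [NormedAddCommGroup V] [InnerProductSpace ℝ V]
    [FiniteDimensional ℝ V] (R : RootSystemCtx V)
    (s : V ≃ₗᵢ[ℝ] V) (hs : s ∈ R.weylGroup) (hinv : s * s = 1)
    (hfix : ∀ i, s (R.fw i) ≠ R.fw i) :
    {lam : V |
      (∃ c : Fin R.l → ℝ, (∀ i, ∃ m : ℕ, 0 < m ∧ 2 * c i = (m : ℝ)) ∧
        lam = ∑ i, c i • R.fw i) ∧
      ‖(2 : ℝ) • lam‖ ^ 2 ≤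
        ‖R.domRep (R.domRep (lam + s lam) - R.rho) + R.rho‖ ^ 2}.Finite :=
  statement6_general R s hs hfix
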